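/- Let ρ(x) = (−7 − 9^x + 4^{x+1}) / (2(4 − 4^x)) for x ∈ (0,1). Then ρ is a bijection from the open interval (0,1) onto the open interval (−2/3, −2 + (9/8)·(ln 9 / ln 4)). -/

import Mathlib

/-!
With `c = log₄ 9 > 1` we have `9 = 4 ^ c` and `9 ^ x = (4 ^ x) ^ c`, so writing `a = 4 ^ x`,
`ρ x = -2 + ½ · (4 ^ c - a ^ c) / (4 - a)`: up to an affine change, ρ is the slope of the secant of
the strictly convex function `t ↦ t ^ c` through `a` and `4`. That slope is strictly increasing in
`a`, equals `8/3` at `a = 1` and tends to the derivative `c · 4 ^ (c - 1) = 9c/4` as `a → 4`.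
A continuous strictly increasing function on `[a, b)` maps `(a, b)` bijectively onto the interval
between its value at `a` and its limit at `b`, and `x ↦ 4 ^ x` maps `(0, 1)` onto `(1, 4)`.
-/

open Real Set Filter Topology

section Interval

variable {α δ : Type*} [ConditionallyCompleteLinearOrder α] [TopologicalSpace α] [OrderTopology α]
  [DenselyOrdered α] [LinearOrder δ] [TopologicalSpace δ] [OrderClosedTopology δ]
  {f : α → δ} {a b : α} {d : δ}

theorem StrictMonoOn.lt_of_tendsto_nhdsLT (hf : StrictMonoOn f (Ico a b))
    (hlim : Tendsto f (𝓝[<] b) (𝓝 d)) {x : α} (hx : x ∈ Ico a b) : f x < d := by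
  obtain ⟨z, hxz, hzb⟩ := exists_between hx.2
  have hz : z ∈ Ico a b := ⟨hx.1.trans hxz.le, hzb⟩
  have : (𝓝[<] b).NeBot := nhdsLT_neBot_of_exists_lt ⟨z, hzb⟩
  have hzd : f z ≤ d := ge_of_tendsto hlim <| by
    filter_upwards [Ioo_mem_nhdsLT hzb] with y hy
    exact (hf hz ⟨hz.1.trans hy.1.le, hy.2⟩ hy.1).le
  exact (hf hx hz hxz).trans_le hzd

theorem StrictMonoOn.bijOn_Ioo_of_tendsto_nhdsLT (hab : a < b) (hf : StrictMonoOn f (Ico a b))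
    (hcont : ContinuousOn f (Ico a b)) (hlim : Tendsto f (𝓝[<] b) (𝓝 d)) :
    BijOn f (Ioo a b) (Ioo (f a) d) := by
  have ha : a ∈ Ico a b := ⟨le_rfl, hab⟩
  refine ⟨fun x hx => ⟨hf ha (Ioo_subset_Ico_self hx) hx.1,
    hf.lt_of_tendsto_nhdsLT hlim (Ioo_subset_Ico_self hx)⟩,
    hf.injOn.mono Ioo_subset_Ico_self, fun v hv => ?_⟩
  have : (𝓝[<] b).NeBot := nhdsLT_neBot_of_exists_lt ⟨a, hab⟩
  obtain ⟨x, hvx, hx⟩ :=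
    ((hlim.eventually (eventually_gt_nhds hv.2)).and (Ioo_mem_nhdsLT hab)).exists
  have hIcc : Icc a x ⊆ Ico a b := Icc_subset_Ico_right hx.2
  exact image_mono (Ioo_subset_Ioo_right hx.2.le)
    (intermediate_value_Ioo hx.1.le (hcont.mono hIcc) ⟨hv.1, hvx⟩)

end Interval

theorem Real.bijOn_rpow_Ioo {b x y : ℝ} (hb : 1 < b) (hxy : x < y) :
    BijOn (fun t : ℝ => b ^ t) (Ioo x y) (Ioo (b ^ x) (b ^ y)) := by
  have hcont : Continuous fun t : ℝ => b ^ t := continuous_const_rpow (by positivity)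
  exact ((strictMono_rpow_of_base_gt_one hb).strictMonoOn (Ico x y)).bijOn_Ioo_of_tendsto_nhdsLT
    hxy hcont.continuousOn ((hcont.tendsto y).mono_left nhdsWithin_le_nhds)

theorem Real.rpow_rpow_logb {b y : ℝ} (hb : 0 < b) (hb₁ : b ≠ 1) (hy : 0 < y) (x : ℝ) :
    (b ^ x) ^ logb b y = y ^ x := by
  rw [← rpow_mul hb.le, mul_comm, rpow_mul hb.le, rpow_logb hb hb₁ hy]

theorem one_lt_logb_four_nine : 1 < logb 4 9 := by
  rw [lt_logb_iff_rpow_lt (by norm_num) (by norm_num)]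
  norm_num

noncomputable def rho (y : ℝ) : ℝ :=
  (-7 - (9 : ℝ) ^ y + (4 : ℝ) ^ (y + 1)) / (2 * (4 - (4 : ℝ) ^ y))

noncomputable def rhoSecant (a : ℝ) : ℝ := -2 + slope (fun t : ℝ => t ^ logb 4 9) 4 a / 2

theorem rho_eq_rhoSecant_four_rpow {y : ℝ} (hy : y < 1) : rho y = rhoSecant (4 ^ y) := by
  have h4 : (4 : ℝ) ^ y ≠ 4 := by
    simpa using (rpow_lt_rpow_of_exponent_lt (by norm_num : (1 : ℝ) < 4) hy).ne
  have h9 : (4 : ℝ) ^ logb 4 9 = 9 := rpow_logb (by norm_num) (by norm_num) (by norm_num)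
  have hsub : (4 : ℝ) ^ y - 4 ≠ 0 := sub_ne_zero.2 h4
  have hsub' : (4 : ℝ) - 4 ^ y ≠ 0 := sub_ne_zero.2 h4.symm
  rw [rho, rhoSecant, slope_def_field, Real.rpow_rpow_logb (by norm_num) (by norm_num)
    (by norm_num), h9, rpow_add (by norm_num), rpow_one]
  field_simp
  ring

theorem rhoSecant_one : rhoSecant 1 = -2 / 3 := by
  rw [rhoSecant, slope_def_field, rpow_logb (by norm_num) (by norm_num) (by norm_num), one_rpow]
  norm_num

theorem strictMonoOn_rhoSecant : StrictMonoOn rhoSecant (Ico 0 4) := by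
  intro x hx y hy hxy
  have hslope := (strictConvexOn_rpow one_lt_logb_four_nine).secant_strict_mono (a := 4)
    (by norm_num) (mem_Ici.2 hx.1) (mem_Ici.2 (hx.1.trans hxy.le)) hx.2.ne hy.2.ne hxy
  simp only [rhoSecant, slope_def_field]
  linarith

theorem continuousOn_rhoSecant : ContinuousOn rhoSecant {4}ᶜ := by
  have hpow : Continuous fun a : ℝ => a ^ logb 4 9 :=
    continuous_rpow_const (zero_le_one.trans one_lt_logb_four_nine.le)
  unfold rhoSecant
  simp only [slope, vsub_eq_sub, smul_eq_mul]
  refine continuousOn_const.add (ContinuousOn.div_const (ContinuousOn.mul ?_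
    (hpow.sub continuous_const).continuousOn) 2)
  exact (continuousOn_id.sub continuousOn_const).inv₀ fun a ha => sub_ne_zero.2 ha

theorem tendsto_rhoSecant :
    Tendsto rhoSecant (𝓝[≠] 4) (𝓝 (-2 + 9 / 8 * (log 9 / log 4))) := by
  have hderiv : logb 4 9 * 4 ^ (logb 4 9 - 1) = 9 / 4 * (log 9 / log 4) := by
    rw [rpow_sub (by norm_num), rpow_logb (by norm_num) (by norm_num) (by norm_num), rpow_one, logb]
    ring
  have hslope := hasDerivAt_iff_tendsto_slope.1
    (hasDerivAt_rpow_const (x := 4) (p := logb 4 9) (Or.inl (by norm_num)))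
  rw [hderiv] at hslope
  rw [show 9 / 8 * (log 9 / log 4) = 9 / 4 * (log 9 / log 4) / 2 by ring]
  exact (hslope.div_const 2).const_add (-2)

theorem bijOn_rhoSecant :
    BijOn rhoSecant (Ioo 1 4) (Ioo (-2 / 3) (-2 + 9 / 8 * (log 9 / log 4))) := by
  rw [← rhoSecant_one]
  exact (strictMonoOn_rhoSecant.mono (Ico_subset_Ico_left zero_le_one)).bijOn_Ioo_of_tendsto_nhdsLT
    (by norm_num) (continuousOn_rhoSecant.mono fun a ha => ha.2.ne)
    (tendsto_rhoSecant.mono_left (nhdsWithin_mono _ fun a ha => ne_of_lt ha))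

/-- ρ(x) = (−7 − 9^x + 4^{x+1}) / (2(4 − 4^x)) is a bijection from (0,1)
onto (−2/3, −2 + (9/8)·(ln 9 / ln 4)). -/
theorem rho_bijOn :
    Set.BijOn (fun y : ℝ => (-7 - (9 : ℝ) ^ y + (4 : ℝ) ^ (y + 1)) / (2 * (4 - (4 : ℝ) ^ y)))
      (Set.Ioo (0 : ℝ) 1)
      (Set.Ioo (-2 / 3 : ℝ) (-2 + 9 / 8 * (Real.log 9 / Real.log 4))) := by
  have hpow : BijOn (fun y : ℝ => (4 : ℝ) ^ y) (Ioo 0 1) (Ioo 1 4) := by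
    simpa using Real.bijOn_rpow_Ioo (by norm_num : (1 : ℝ) < 4) zero_lt_one
  exact (bijOn_rhoSecant.comp hpow).congr fun y hy => (rho_eq_rhoSecant_four_rpow hy.2).symm
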